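/- arXiv:2402.12494 — 2 statements merged into one kernel-verified Lean document; each statement's English description precedes it below -/
import Mathlib

section
/- Let n be a positive integer and let e_1,...,e_n be nonnegative integers with e_n = n!. Define g(m) = Σ_{k=1}^n e_k (m+1)^k m^{n-k}. Then every real root of the polynomial g lies in the half-open interval [-1, 0); that is, if g(x) = 0 for a real number x, then -1 ≤ x < 0. -/
/-!
Outside `[-1, 0)` the numbers `x` and `x + 1` have the same sign. For `x ≥ 0` every term of
`g x` is nonnegative and the term `n! (x+1)^n` is positive; for `x < -1` the same holds for
`(-1)^n g x`, which is the defining sum evaluated at `-x` and `-(x+1)`.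
-/

open Finset

lemma sum_Icc_mul_pow_mul_pow_pos {n : ℕ} (hn : 0 < n) {c : ℕ → ℝ}
    (hc : ∀ k ∈ Icc 1 n, 0 ≤ c k) (hcn : 0 < c n) {a b : ℝ} (ha : 0 ≤ a) (hb : 0 < b) :
    0 < ∑ k ∈ Icc 1 n, c k * b ^ k * a ^ (n - k) := by
  refine sum_pos' (fun k hk => by have := hc k hk; positivity) ⟨n, mem_Icc.mpr ⟨hn, le_rfl⟩, ?_⟩
  rw [Nat.sub_self, pow_zero, mul_one]
  positivity

lemma sum_Icc_mul_neg_pow_mul_neg_pow {R : Type*} [CommRing R] (n : ℕ) (c : ℕ → R) (a b : R) :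
    ∑ k ∈ Icc 1 n, c k * (-b) ^ k * (-a) ^ (n - k) =
      (-1) ^ n * ∑ k ∈ Icc 1 n, c k * b ^ k * a ^ (n - k) := by
  rw [mul_sum]
  refine sum_congr rfl fun k hk => ?_
  have hsign : (-1 : R) ^ n = (-1) ^ k * (-1) ^ (n - k) := by
    rw [← pow_add, Nat.add_sub_cancel' (mem_Icc.mp hk).2]
  rw [hsign, neg_pow b, neg_pow a]
  ring

/-- if e₁,…,eₙ are nonnegative integers with eₙ = n!, then every real
root of g(x) = Σ_{k=1}^n e_k (x+1)^k x^{n-k} lies in [-1, 0). -/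
theorem stmt0 (n : ℕ) (hn : 0 < n) (e : ℕ → ℕ) (he : e n = Nat.factorial n)
    (g : ℝ → ℝ)
    (hg : ∀ x : ℝ, g x = ∑ k ∈ Finset.Icc 1 n, (e k : ℝ) * (x + 1) ^ k * x ^ (n - k))
    (x : ℝ) (hx : g x = 0) :
    -1 ≤ x ∧ x < 0 := by
  have hc : ∀ k ∈ Icc 1 n, (0 : ℝ) ≤ e k := fun k _ => Nat.cast_nonneg _
  have hcn : (0 : ℝ) < e n := by rw [he]; exact_mod_cast n.factorial_pos
  constructor
  · by_contra! hlt
    have hpos := sum_Icc_mul_pow_mul_pow_pos hn hc hcn (a := -x) (b := -(x + 1))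
      (by linarith) (by linarith)
    rw [sum_Icc_mul_neg_pow_mul_neg_pow, ← hg, hx, mul_zero] at hpos
    exact hpos.false
  · by_contra! hge
    have hpos := sum_Icc_mul_pow_mul_pow_pos hn hc hcn hge (by linarith : 0 < x + 1)
    rw [← hg, hx] at hpos
    exact hpos.false
end

section
/- Let Λ be a hereditary ring, T an exceptional module (Ext^1(T,T)=0), Z a module with Hom(T,Z)=0 and Ext^1(T,Z) ≠ 0 finite-dimensional over the division ring End(T). Let 0 → Z → E → T^s → 0 be the universal extension given by a basis of Ext^1(T,Z) over End(T), so that the connecting map Hom(T, T^s) → Ext^1(T, Z) is an isomorphism. Then Hom(T,E) = 0 and Ext^1(T,E) = 0, i.e., E lies in the right perpendicular category T^⊥. -/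
open CategoryTheory Abelian

noncomputable instance hasExtModuleCat (R : Type) [Ring R] : HasExt.{1} (ModuleCat.{0} R) := by
  have : HasDerivedCategory.{1} (ModuleCat.{0} R) := HasDerivedCategory.standard _
  exact hasExt_of_hasDerivedCategory _

universe w v u

lemma ext_mk₀_add {C : Type u} [Category.{v} C] [Abelian C] [HasExt.{w} C]
    {X Y : C} (f g : X ⟶ Y) : Ext.mk₀ (f + g) = Ext.mk₀ f + Ext.mk₀ g := by
  letI := HasDerivedCategory.standard C
  apply Ext.ext
  simp [Ext.mk₀_hom, ShiftedHom.mk₀, Functor.map_add, Preadditive.add_comp]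

lemma ext_mk₀_sum {C : Type u} [Category.{v} C] [Abelian C] [HasExt.{w} C]
    {X Y : C} {ι : Type*} (t : Finset ι) (f : ι → (X ⟶ Y)) :
    Ext.mk₀ (∑ j ∈ t, f j) = ∑ j ∈ t, Ext.mk₀ (f j) := by
  classical
  induction t using Finset.cons_induction with
  | empty => simp [Ext.mk₀_zero]
  | cons a t ha ih => rw [Finset.sum_cons, Finset.sum_cons, ext_mk₀_add, ih]


/-- universal extension 0 → Z → E → Tˢ → 0 of an exceptional module T
with Hom(T,Z) = 0, Ext¹(T,Z) ≠ 0, whose connecting map Hom(T,Tˢ) → Ext¹(T,Z) is an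
isomorphism; then E lies in T^⊥, i.e. Hom(T,E) = 0 and Ext¹(T,E) = 0. -/
theorem stmt5 (R : Type) [Ring R]
    (hered : ∀ A B : ModuleCat.{0} R, Subsingleton (Ext A B 2))
    (T Z E : ModuleCat.{0} R) (s : ℕ)
    (hexc : Subsingleton (Ext T T 1))
    (hHomTZ : ∀ g : T ⟶ Z, g = 0)
    (hExtTZ : ∃ e : Ext T Z 1, e ≠ 0)
    (i : Z ⟶ E) (p : E ⟶ ModuleCat.of R (Fin s → T)) (w : i ≫ p = 0)
    (hS : (ShortComplex.mk i p w).ShortExact)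
    (hconn : Function.Bijective
      (fun φ : T ⟶ ModuleCat.of R (Fin s → T) =>
        (Ext.mk₀ φ).comp hS.extClass (zero_add 1))) :
    (∀ g : T ⟶ E, g = 0) ∧ Subsingleton (Ext T E 1) := by
  have hmono : Mono (ShortComplex.mk i p w).f := hS.mono_f
  constructor
  · intro g
    have hgp : g ≫ p = 0 := by
      have h0 : (Ext.mk₀ (g ≫ p)).comp hS.extClass (zero_add 1) =
          (Ext.mk₀ (0 : T ⟶ ModuleCat.of R (Fin s → T))).comp hS.extClass (zero_add 1) := by
        rw [Ext.mk₀_zero, Ext.zero_comp, ← Ext.mk₀_comp_mk₀,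
          Ext.comp_assoc _ _ _ (zero_add 0) (zero_add 1) (by omega)]
        have : (Ext.mk₀ p).comp hS.extClass (zero_add 1) = 0 := hS.comp_extClass
        rw [this, Ext.comp_zero]
      exact hconn.1 h0
    have := hS.exact.lift_f g hgp
    rw [hHomTZ (hS.exact.lift g hgp), Limits.zero_comp] at this
    exact this.symm
  · -- Ext T T^s 1 = 0
    have hTs : ∀ e : Ext T (ModuleCat.of R (Fin s → T)) 1, e = 0 := by
      intro e
      classical
      set π : Fin s → (ModuleCat.of R (Fin s → T) ⟶ T) :=
        fun j => ModuleCat.ofHom (LinearMap.proj j : (Fin s → T) →ₗ[R] T) with hπ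
      set σ : Fin s → (T ⟶ ModuleCat.of R (Fin s → T)) :=
        fun j => ModuleCat.ofHom (LinearMap.single R (fun _ : Fin s => T) j) with hσ
      have hid : (𝟙 (ModuleCat.of R (Fin s → T))) = ∑ j, π j ≫ σ j := by
        have h : (LinearMap.id : (Fin s → T) →ₗ[R] (Fin s → T)) =
            ∑ j : Fin s, (LinearMap.single R (fun _ : Fin s => T) j).comp
              (LinearMap.proj j) := by
          apply LinearMap.ext
          intro x
          rw [LinearMap.sum_apply]
          simp only [LinearMap.comp_apply, LinearMap.proj_apply, LinearMap.coe_single]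
          exact (Finset.univ_sum_single x).symm
        apply ModuleCat.hom_ext
        simp only [ModuleCat.hom_id, ModuleCat.hom_sum, ModuleCat.hom_comp, hπ, hσ, ModuleCat.hom_ofHom]
        exact h
      calc e = e.comp (Ext.mk₀ (𝟙 _)) (add_zero 1) := (Ext.comp_mk₀_id e).symm
        _ = e.comp (∑ j, Ext.mk₀ (π j ≫ σ j)) (add_zero 1) := by
            rw [hid, ext_mk₀_sum]
        _ = ∑ j, e.comp (Ext.mk₀ (π j ≫ σ j)) (add_zero 1) := by
            exact map_sum ((Ext.bilinearComp T _ _ 1 0 1 (add_zero 1)) e) _ _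
        _ = 0 := by
            apply Finset.sum_eq_zero
            intro j _
            rw [← Ext.mk₀_comp_mk₀, ← Ext.comp_assoc _ _ _ (add_zero 1) (zero_add 0) (by omega)]
            have : e.comp (Ext.mk₀ (π j)) (add_zero 1) = 0 := Subsingleton.elim _ _
            rw [this, Ext.zero_comp]
    constructor
    intro y y'
    suffices h : ∀ x : Ext T E 1, x = 0 by rw [h y, h y']
    intro x
    obtain ⟨x₁, hx₁⟩ := Ext.covariant_sequence_exact₂ T hS x (hTs _)
    obtain ⟨φ, hφ⟩ := hconn.2 x₁
    rw [← hx₁, ← hφ]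
    dsimp only
    have hfe : hS.extClass.comp (Ext.mk₀ (ShortComplex.mk i p w).f) (add_zero 1) = 0 :=
      hS.extClass_comp
    rw [Ext.comp_assoc_of_third_deg_zero, hfe, Ext.comp_zero]
end
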